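/- Let g(x_0, x_{l-k}) = x_0 · x_{l-k} define an (n-k)-stage feedback shift register over F_2 (with recurrence s_{i+n-k} = s_i · s_{i+l-k}), where 0 < k < l < n. The set of periodic orbits of its state map on F_2^{n-k} consists of exactly the two fixed points (all-zeros and all-ones) if and only if gcd(n-k, l-k) = 1. Moreover, if d = gcd(n-k, l-k) > 1, the cyclic sequence of period d with a single 1 followed by d-1 zeros is an additional periodic orbit. -/
import Mathlib


/-- The state map of an `m`-stage FSR with feedback function `h`. -/
def stateMap (m : ℕ) (h : (Fin m → ZMod 2) → ZMod 2) (x : Fin m → ZMod 2) :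
    Fin m → ZMod 2 :=
  fun i => if hi : i.val + 1 < m then x ⟨i.val + 1, hi⟩ else h x

def fsrSeq (m r : ℕ) (hrm : r < m) (x : Fin m → ZMod 2) : ℕ → ZMod 2
  | i => if h : i < m then x ⟨i, h⟩ else
      fsrSeq m r hrm x (i - m) * fsrSeq m r hrm x (i - m + r)
  termination_by i => i
  decreasing_by all_goals omega

lemma fsrSeq_lt {m r : ℕ} (hrm : r < m) (x : Fin m → ZMod 2) {i : ℕ} (hi : i < m) :
    fsrSeq m r hrm x i = x ⟨i, hi⟩ := by rw [fsrSeq]; simp [hi]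

lemma fsrSeq_ge {m r : ℕ} (hrm : r < m) (x : Fin m → ZMod 2) {i : ℕ} (hi : m ≤ i) :
    fsrSeq m r hrm x i = fsrSeq m r hrm x (i - m) * fsrSeq m r hrm x (i - m + r) := by
  rw [fsrSeq]; simp [Nat.not_lt.2 hi]

lemma zmod2_eq_zero_or_one (a : ZMod 2) : a = 0 ∨ a = 1 := by revert a; decide

lemma zmod2_mul_eq_one {a b : ZMod 2} (hab : a * b = 1) : a = 1 ∧ b = 1 := by
  revert hab; revert a b; decide

section

variable {m r : ℕ} (hrm : r < m)
  (h : (Fin m → ZMod 2) → ZMod 2)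
  (hh : ∀ x : Fin m → ZMod 2, h x = x ⟨0, by omega⟩ * x ⟨r, hrm⟩)

include hh

lemma fsrSeq_stateMap (x : Fin m → ZMod 2) (i : ℕ) :
    fsrSeq m r hrm (stateMap m h x) i = fsrSeq m r hrm x (i + 1) := by
  induction i using Nat.strong_induction_on with
  | _ i ih =>
    rcases lt_trichotomy (i + 1) m with h1 | h1 | h1
    · rw [fsrSeq_lt hrm _ (by omega : i < m), fsrSeq_lt hrm _ h1]
      simp [stateMap, h1]
    · subst h1
      rw [fsrSeq_lt hrm _ (by omega : i < i + 1), fsrSeq_ge hrm _ (le_refl _)]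
      simp only [stateMap, Nat.sub_self, Nat.zero_add]
      rw [dif_neg (by omega), hh, fsrSeq_lt hrm _ (by omega : 0 < i + 1),
        fsrSeq_lt hrm _ hrm]
    · rw [fsrSeq_ge hrm _ (by omega : m ≤ i), fsrSeq_ge hrm _ (by omega : m ≤ i + 1),
        ih (i - m) (by omega), ih (i - m + r) (by omega)]
      congr 2 <;> omega

lemma iterate_apply_eq_fsrSeq (x : Fin m → ZMod 2) (j : ℕ) (i : Fin m) :
    ((stateMap m h)^[j] x) i = fsrSeq m r hrm x (j + i.val) := by
  induction j generalizing x with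
  | zero => simp [fsrSeq_lt hrm x i.isLt]
  | succ j ih =>
      rw [Function.iterate_succ_apply, ih, fsrSeq_stateMap hrm h hh]
      congr 1; omega

variable {p : ℕ} {x : Fin m → ZMod 2} (hp0 : 0 < p)
  (hp : (stateMap m h)^[p] x = x)

include hp

/-- the generated sequence of a periodic state has period `p`. -/
lemma fsrSeq_period (i : ℕ) : fsrSeq m r hrm x (i + p) = fsrSeq m r hrm x i := by
  induction i using Nat.strong_induction_on with
  | _ i ih =>
    rcases lt_or_ge i m with h1 | h1
    · have := congrFun hp ⟨i, h1⟩
      rw [iterate_apply_eq_fsrSeq hrm h hh] at this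
      rw [Nat.add_comm, this, fsrSeq_lt hrm _ h1]
    · rw [fsrSeq_ge hrm _ (by omega : m ≤ i + p), fsrSeq_ge hrm _ h1,
        show i + p - m = (i - m) + p by omega, show i - m + p + r = (i - m + r) + p by omega,
        ih (i - m) (by omega), ih (i - m + r) (by omega)]

lemma fsrSeq_period_mul (t i : ℕ) :
    fsrSeq m r hrm x (i + t * p) = fsrSeq m r hrm x i := by
  induction t with
  | zero => simp
  | succ t ih =>
      rw [show i + (t + 1) * p = (i + t * p) + p by ring,
        fsrSeq_period hrm h hh hp, ih]

include hp0

lemma fsrSeq_chain (j i : ℕ) (h1 : fsrSeq m r hrm x (i + (j + 1) * m) = 1) :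
    fsrSeq m r hrm x (i + m) = 1 := by
  induction j with
  | zero => simpa using h1
  | succ j ih =>
      apply ih
      rw [fsrSeq_ge hrm _ (by rw [Nat.succ_mul (j+1) m]; omega : m ≤ i + (j + 1 + 1) * m)] at h1
      have := (zmod2_mul_eq_one h1).1
      rwa [show i + (j + 1 + 1) * m - m = i + (j + 1) * m by rw [Nat.succ_mul (j+1) m]; omega] at this

lemma fsrSeq_shift_m (i : ℕ) : fsrSeq m r hrm x (i + m) = fsrSeq m r hrm x i := by
  rcases zmod2_eq_zero_or_one (fsrSeq m r hrm x i) with h0 | h1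
  · rw [fsrSeq_ge hrm _ (by omega : m ≤ i + m), show i + m - m = i by omega, h0, zero_mul]
  · rw [h1]
    apply fsrSeq_chain hrm h hh hp0 hp (p - 1)
    rw [show (p - 1 + 1) * m = m * p by rw [Nat.sub_add_cancel hp0]; ring,
      fsrSeq_period_mul hrm h hh hp, h1]

lemma fsrSeq_shift_m_mul (t i : ℕ) :
    fsrSeq m r hrm x (i + t * m) = fsrSeq m r hrm x i := by
  induction t with
  | zero => simp
  | succ t ih =>
      rw [show i + (t + 1) * m = (i + t * m) + m by ring,
        fsrSeq_shift_m hrm h hh hp0 hp, ih]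

lemma fsrSeq_mod (i : ℕ) : fsrSeq m r hrm x i = fsrSeq m r hrm x (i % m) := by
  conv_lhs => rw [← Nat.mod_add_div' i m]
  rw [fsrSeq_shift_m_mul hrm h hh hp0 hp]

lemma fsrSeq_shift_r {i : ℕ} (h1 : fsrSeq m r hrm x i = 1) :
    fsrSeq m r hrm x (i + r) = 1 := by
  have e := fsrSeq_shift_m hrm h hh hp0 hp i
  rw [fsrSeq_ge hrm _ (by omega : m ≤ i + m), show i + m - m = i by omega, h1, one_mul] at e
  exact e

lemma fsrSeq_shift_r_mul (t : ℕ) {i : ℕ} (h1 : fsrSeq m r hrm x i = 1) :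
    fsrSeq m r hrm x (i + t * r) = 1 := by
  induction t with
  | zero => simpa
  | succ t ih =>
      rw [show i + (t + 1) * r = (i + t * r) + r by ring]
      exact fsrSeq_shift_r hrm h hh hp0 hp ih

lemma fsrSeq_all_one (hg : Nat.gcd m r = 1) {i : ℕ} (h1 : fsrSeq m r hrm x i = 1)
    (j : ℕ) : fsrSeq m r hrm x j = 1 := by
  haveI : NeZero m := ⟨by omega⟩
  have hcop : Nat.Coprime r m := Nat.coprime_comm.mp hg
  set u : (ZMod m)ˣ := ZMod.unitOfCoprime r hcop with hu
  set a : ℕ := (((j : ZMod m) - (i : ZMod m)) * ((u⁻¹ : (ZMod m)ˣ) : ZMod m)).val with ha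
  have hmod : (i + a * r) % m = j % m := by
    have : ((i + a * r : ℕ) : ZMod m) = ((j : ℕ) : ZMod m) := by
      push_cast
      rw [ha, ZMod.natCast_val, ZMod.cast_id]
      have hur : ((u : ZMod m)) = (r : ZMod m) := ZMod.coe_unitOfCoprime r hcop
      have : ((u⁻¹ : (ZMod m)ˣ) : ZMod m) * (r : ZMod m) = 1 := by
        rw [← hur, ← Units.val_mul, inv_mul_cancel, Units.val_one]
      calc (i : ZMod m) + ((j : ZMod m) - (i : ZMod m)) * ((u⁻¹ : (ZMod m)ˣ) : ZMod m) * (r : ZMod m)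
          = (i : ZMod m) + ((j : ZMod m) - (i : ZMod m)) * (((u⁻¹ : (ZMod m)ˣ) : ZMod m) * (r : ZMod m)) := by ring
        _ = (j : ZMod m) := by rw [this]; ring
    exact (ZMod.natCast_eq_natCast_iff _ _ _).mp this
  have h2 : fsrSeq m r hrm x (i + a * r) = 1 := fsrSeq_shift_r_mul hrm h hh hp0 hp a h1
  rw [fsrSeq_mod hrm h hh hp0 hp, ← hmod, ← fsrSeq_mod hrm h hh hp0 hp, h2]

end

section

variable {m r : ℕ} (hrm : r < m)
  (h : (Fin m → ZMod 2) → ZMod 2)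
  (hh : ∀ x : Fin m → ZMod 2, h x = x ⟨0, by omega⟩ * x ⟨r, hrm⟩)

include hh

lemma stateMap_zero : stateMap m h (fun _ => 0) = fun _ => 0 := by
  funext i; unfold stateMap; split
  · rfl
  · rw [hh]; simp

lemma stateMap_one : stateMap m h (fun _ => 1) = fun _ => 1 := by
  funext i; unfold stateMap; split
  · rfl
  · rw [hh]; simp

lemma fsrSeq_star {d : ℕ} (hd : 0 < d) (hdm : d ∣ m) (hdr : d ∣ r) (i : ℕ) :
    fsrSeq m r hrm (fun j : Fin m => if j.val % d = 0 then 1 else 0) i =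
      if i % d = 0 then 1 else 0 := by
  obtain ⟨c1, hc1⟩ := hdm
  obtain ⟨c2, hc2⟩ := hdr
  induction i using Nat.strong_induction_on with
  | _ i ih =>
    rcases lt_or_ge i m with h1 | h1
    · rw [fsrSeq_lt hrm _ h1]
    · rw [fsrSeq_ge hrm _ h1, ih (i - m) (by omega), ih (i - m + r) (by omega)]
      have e1 : (i - m) % d = i % d := by
        conv_rhs => rw [show i = (i - m) + d * c1 by omega]
        rw [Nat.add_mul_mod_self_left]
      have e2 : (i - m + r) % d = i % d := by
        rw [show i - m + r = (i - m) + d * c2 by omega, Nat.add_mul_mod_self_left, e1]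
      rw [e1, e2]
      by_cases hz : i % d = 0 <;> simp [hz]

lemma star_periodic {d : ℕ} (hd : 0 < d) (hdm : d ∣ m) (hdr : d ∣ r) :
    (stateMap m h)^[m] (fun j : Fin m => if j.val % d = 0 then 1 else 0) =
      (fun j : Fin m => if j.val % d = 0 then 1 else 0) := by
  obtain ⟨c1, hc1⟩ := hdm
  funext i
  rw [iterate_apply_eq_fsrSeq hrm h hh, fsrSeq_star hrm h hh hd ⟨c1, hc1⟩ hdr]
  have : (m + i.val) % d = i.val % d := by
    rw [show m + i.val = i.val + d * c1 by omega, Nat.add_mul_mod_self_left]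
  rw [this]

end

/-- Let `0 < k < l < n` and consider the `(n-k)`-stage FSR over `F_2`
with feedback function `h(x_0,...,x_{m-1}) = x_0 · x_{l-k}` (recurrence
`s_{i+n-k} = s_i · s_{i+l-k}`).  The set of periodic points of its state map on
`F_2^{n-k}` consists of exactly the two fixed points (all-zeros and all-ones) if and
only if `gcd(n-k, l-k) = 1`.  Moreover, if `d = gcd(n-k, l-k) > 1`, then the state
coming from the cyclic sequence of period `d` with a single `1` followed by `d-1`
zeros is an additional periodic point. -/
theorem two_fixed_points_iff_gcd_one (n k l : ℕ) (hk : 0 < k) (hkl : k < l) (hln : l < n)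
    (h : (Fin (n - k) → ZMod 2) → ZMod 2)
    (hh : ∀ x : Fin (n - k) → ZMod 2, h x = x ⟨0, by omega⟩ * x ⟨l - k, by omega⟩) :
    ({x : Fin (n - k) → ZMod 2 | ∃ p, 0 < p ∧ (stateMap (n - k) h)^[p] x = x} =
        {(fun _ => 0), (fun _ => 1)} ↔ Nat.gcd (n - k) (l - k) = 1) ∧
    (1 < Nat.gcd (n - k) (l - k) →
      (∃ p, 0 < p ∧ (stateMap (n - k) h)^[p]
          (fun i : Fin (n - k) => if i.val % Nat.gcd (n - k) (l - k) = 0 then 1 else 0) =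
        (fun i : Fin (n - k) => if i.val % Nat.gcd (n - k) (l - k) = 0 then 1 else 0)) ∧
      (fun i : Fin (n - k) => if i.val % Nat.gcd (n - k) (l - k) = 0 then (1 : ZMod 2) else 0) ≠
        (fun _ => 0) ∧
      (fun i : Fin (n - k) => if i.val % Nat.gcd (n - k) (l - k) = 0 then (1 : ZMod 2) else 0) ≠
        (fun _ => 1)) := by
  have hrm : l - k < n - k := by omega
  have hh' : ∀ x : Fin (n - k) → ZMod 2, h x = x ⟨0, by omega⟩ * x ⟨l - k, hrm⟩ := hh
  set d := Nat.gcd (n - k) (l - k) with hd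
  have hdpos : 0 < d := Nat.gcd_pos_of_pos_left _ (by omega)
  have hdm : d ∣ (n - k) := Nat.gcd_dvd_left _ _
  have hdr : d ∣ (l - k) := Nat.gcd_dvd_right _ _
  constructor
  · constructor
    · intro hset
      by_contra hg
      have hd1 : 1 < d := by omega
      have hmem : (fun i : Fin (n - k) => if i.val % d = 0 then (1 : ZMod 2) else 0) ∈
          {x : Fin (n - k) → ZMod 2 | ∃ p, 0 < p ∧ (stateMap (n - k) h)^[p] x = x} :=
        ⟨n - k, by omega, star_periodic hrm h hh' hdpos hdm hdr⟩
      rw [hset] at hmem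
      simp only [Set.mem_insert_iff, Set.mem_singleton_iff] at hmem
      rcases hmem with he | he
      · have := congrFun he ⟨0, by omega⟩
        simp at this
      · have := congrFun he ⟨1, by omega⟩
        simp [Nat.mod_eq_of_lt hd1] at this
    · intro hg
      ext x
      simp only [Set.mem_setOf_eq, Set.mem_insert_iff, Set.mem_singleton_iff]
      constructor
      · rintro ⟨p, hp0, hp⟩
        by_cases hc : ∃ i, fsrSeq (n - k) (l - k) hrm x i = 1
        · obtain ⟨i, hi⟩ := hc
          right
          funext j
          have := fsrSeq_all_one hrm h hh' hp0 hp hg hi j.val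
          rw [fsrSeq_lt hrm x j.isLt] at this
          exact this
        · left
          push_neg at hc
          funext j
          rcases zmod2_eq_zero_or_one (fsrSeq (n - k) (l - k) hrm x j.val) with h0 | h1
          · rw [fsrSeq_lt hrm x j.isLt] at h0
            exact h0
          · exact absurd h1 (hc _)
      · rintro (rfl | rfl)
        · exact ⟨1, one_pos, by simpa using stateMap_zero hrm h hh'⟩
        · exact ⟨1, one_pos, by simpa using stateMap_one hrm h hh'⟩
  · intro hd1
    refine ⟨⟨n - k, by omega, star_periodic hrm h hh' hdpos hdm hdr⟩, ?_, ?_⟩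
    · intro he
      have := congrFun he ⟨0, by omega⟩
      simp at this
    · intro he
      have := congrFun he ⟨1, by omega⟩
      simp [Nat.mod_eq_of_lt hd1] at this
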